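/- arXiv:nlin/0204036 — 7 statements merged into one kernel-verified Lean document; each statement's English description precedes it below -/
import Mathlib

section
/- For every integer k ≥ 1, the combination coefficients satisfy Σ_{i=0}^{k+1} β_{k,i}·α_i = 0 and Σ_{i=0}^{k+1} β_{k,i}·γ_i = 0. -/
/-- For every integer `k ≥ 1`, the combination coefficients satisfy
`Σ_{i=0}^{k+1} β_{k,i} α_i = 0` and `Σ_{i=0}^{k+1} β_{k,i} γ_i = 0`.
Here `α_0 = 0`, `γ_0 = 1/2`, `α_i = (-1)^(i-1) C(2i-2, i-1)`,
`γ_i = (-1)^i C(2i-2, i)` for `i ≥ 1`, `δ_i = -2(α_i + γ_i)` for `i ≥ 1`,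
and `β_{0,0} = 2`, `β_{0,1} = 1`, `β_{1,0} = -2`, `β_{1,1} = 2`, `β_{1,2} = 1`,
with, for `k ≥ 1`: `β_{k+1,i} = β_{k,i-1}` for `1 ≤ i ≤ k+2` and
`β_{k+1,0} = Σ_{i=0}^{k+1} β_{k,i} δ_{i+1}`. -/
theorem stmt2 (α γ δ : ℕ → ℚ) (β : ℕ → ℕ → ℚ)
    (hα0 : α 0 = 0) (hγ0 : γ 0 = 1/2)
    (hα : ∀ i, 1 ≤ i → α i = (-1 : ℚ)^(i-1) * (Nat.choose (2*i-2) (i-1) : ℚ))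
    (hγ : ∀ i, 1 ≤ i → γ i = (-1 : ℚ)^i * (Nat.choose (2*i-2) i : ℚ))
    (hδ : ∀ i, 1 ≤ i → δ i = -2 * (α i + γ i))
    (hβ00 : β 0 0 = 2) (hβ01 : β 0 1 = 1)
    (hβ10 : β 1 0 = -2) (hβ11 : β 1 1 = 2) (hβ12 : β 1 2 = 1)
    (hβrec : ∀ k, 1 ≤ k → ∀ i, 1 ≤ i → i ≤ k + 2 → β (k+1) i = β k (i-1))
    (hβ0 : ∀ k, 1 ≤ k → β (k+1) 0 = ∑ i ∈ Finset.range (k+2), β k i * δ (i+1)) :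
    ∀ k, 1 ≤ k →
      (∑ i ∈ Finset.range (k+2), β k i * α i) = 0 ∧
      (∑ i ∈ Finset.range (k+2), β k i * γ i) = 0 := by
  -- binomial identity C(2j+2, j+1) = 2(C(2j,j) + C(2j,j+1))
  have hchoose : ∀ j : ℕ, ((2*j+2).choose (j+1) : ℚ)
      = 2 * ((2*j).choose j + (2*j).choose (j+1)) := by
    intro j
    have h1 : (2*j+1).choose (j+1) = (2*j+1).choose j := by
      have := Nat.choose_symm (n := 2*j+1) (k := j) (by omega)
      rwa [show 2*j+1-j = j+1 by omega] at this
    have h2 : (2*j+2).choose (j+1) = (2*j+1).choose j + (2*j+1).choose (j+1) :=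
      Nat.choose_succ_succ _ _
    have h3 : (2*j+1).choose (j+1) = (2*j).choose j + (2*j).choose (j+1) :=
      Nat.choose_succ_succ _ _
    have : (2*j+2).choose (j+1) = 2 * ((2*j).choose j + (2*j).choose (j+1)) := by
      omega
    exact_mod_cast congrArg (Nat.cast : ℕ → ℚ) this
  -- key shift relation
  have hstep : ∀ i, α (i+1) = -2 * α i + 2 * γ i := by
    intro i
    cases i with
    | zero =>
      rw [hα 1 le_rfl, hα0, hγ0]
      norm_num
    | succ j =>
      rw [hα (j+2) (by omega), hα (j+1) (by omega), hγ (j+1) (by omega)]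
      rw [show 2*(j+2)-2 = 2*j+2 by omega, show (j+2)-1 = j+1 by omega,
          show 2*(j+1)-2 = 2*j by omega, show (j+1)-1 = j by omega, hchoose j]
      ring
  intro k hk
  induction k, hk using Nat.le_induction with
  | base =>
    have hα1 : α 1 = 1 := by rw [hα 1 le_rfl]; norm_num
    have hα2 : α 2 = -2 := by rw [hα 2 (by norm_num)]; norm_num
    have hγ1 : γ 1 = 0 := by rw [hγ 1 le_rfl]; norm_num
    have hγ2 : γ 2 = 1 := by rw [hγ 2 (by norm_num)]; norm_num
    constructor <;>
      simp [Finset.sum_range_succ, hβ10, hβ11, hβ12, hα0, hγ0, hα1, hα2, hγ1, hγ2] <;>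
      norm_num
  | succ k hk ih =>
    obtain ⟨ihα, ihγ⟩ := ih
    have hU : (∑ i ∈ Finset.range (k+1+2), β (k+1) i * α i) = 0 := by
      rw [Finset.sum_range_succ', hα0, mul_zero, add_zero]
      have hcongr : ∀ i ∈ Finset.range (k+2), β (k+1) (i+1) * α (i+1)
          = -2 * (β k i * α i) + 2 * (β k i * γ i) := by
        intro i hi
        rw [Finset.mem_range] at hi
        rw [hβrec k hk (i+1) (by omega) (by omega), Nat.add_sub_cancel, hstep]
        ring
      rw [Finset.sum_congr rfl hcongr, Finset.sum_add_distrib, ← Finset.mul_sum,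
        ← Finset.mul_sum, ihα, ihγ]
      ring
    refine ⟨hU, ?_⟩
    rw [Finset.sum_range_succ', hγ0, hβ0 k hk, Finset.sum_mul, ← Finset.sum_add_distrib]
    have hcongr : ∀ i ∈ Finset.range (k+2),
        β (k+1) (i+1) * γ (i+1) + β k i * δ (i+1) * (1/2)
          = 2 * (β k i * α i) - 2 * (β k i * γ i) := by
      intro i hi
      rw [Finset.mem_range] at hi
      rw [hβrec k hk (i+1) (by omega) (by omega), Nat.add_sub_cancel,
        hδ (i+1) (by omega), hstep]
      ring
    rw [Finset.sum_congr rfl hcongr, Finset.sum_sub_distrib, ← Finset.mul_sum,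
      ← Finset.mul_sum, ihα, ihγ]
    ring
end

section
/- Set S_k := Σ_{i=0}^{k+1} β_{k,i}·(ζ_{i,2} - ζ_{i,1}). Then for every integer k ≥ 1, S_{k+1} = -4·S_k. -/
lemma choose_key (i : ℕ) :
    (2*i+2).choose (i+1) = 2 * ((2*i).choose i) + 2 * ((2*i).choose (i+1)) := by
  have h1 : (2*i+2).choose (i+1) = (2*i+1).choose i + (2*i+1).choose (i+1) :=
    Nat.choose_succ_succ _ _
  have h2 : (2*i+1).choose (i+1) = (2*i).choose i + (2*i).choose (i+1) :=
    Nat.choose_succ_succ _ _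
  have h3 : (2*i+1).choose i = (2*i+1).choose (i+1) := by
    have h := Nat.choose_symm (show i ≤ 2*i+1 by omega)
    have he : 2*i+1 - i = i+1 := by omega
    rw [he] at h
    omega
  omega

/-- Set `S_k := Σ_{i=0}^{k+1} β_{k,i} (ζ_{i,2} - ζ_{i,1})`.  Then for every
integer `k ≥ 1`, `S_{k+1} = -4 S_k`.  Here `α_0 = 0`, `γ_0 = 1/2`,
`α_i = (-1)^(i-1) C(2i-2, i-1)`, `γ_i = (-1)^i C(2i-2, i)` for `i ≥ 1`,
`δ_i = -2(α_i + γ_i)` for `i ≥ 1`; `β_{0,0} = 2`, `β_{0,1} = 1`, `β_{1,0} = -2`,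
`β_{1,1} = 2`, `β_{1,2} = 1`, and for `k ≥ 1`: `β_{k+1,i} = β_{k,i-1}` for
`1 ≤ i ≤ k+2` and `β_{k+1,0} = Σ_{i=0}^{k+1} β_{k,i} δ_{i+1}`; and
`ζ_{0,1} = 0`, `ζ_{0,2} = 1/2`, `ζ_{i+1,1} = -2ζ_{i,1} + 2ζ_{i,2} + α_i - 2γ_i`,
`ζ_{i+1,2} = 2ζ_{i,1} - 2ζ_{i,2} + α_i - δ_{i+1}/2`. -/
theorem stmt3 (α γ δ : ℕ → ℚ) (β : ℕ → ℕ → ℚ) (ζ₁ ζ₂ : ℕ → ℚ)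
    (hα0 : α 0 = 0) (hγ0 : γ 0 = 1/2)
    (hα : ∀ i, 1 ≤ i → α i = (-1 : ℚ)^(i-1) * (Nat.choose (2*i-2) (i-1) : ℚ))
    (hγ : ∀ i, 1 ≤ i → γ i = (-1 : ℚ)^i * (Nat.choose (2*i-2) i : ℚ))
    (hδ : ∀ i, 1 ≤ i → δ i = -2 * (α i + γ i))
    (hβ00 : β 0 0 = 2) (hβ01 : β 0 1 = 1)
    (hβ10 : β 1 0 = -2) (hβ11 : β 1 1 = 2) (hβ12 : β 1 2 = 1)
    (hβrec : ∀ k, 1 ≤ k → ∀ i, 1 ≤ i → i ≤ k + 2 → β (k+1) i = β k (i-1))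
    (hβ0 : ∀ k, 1 ≤ k → β (k+1) 0 = ∑ i ∈ Finset.range (k+2), β k i * δ (i+1))
    (hζ10 : ζ₁ 0 = 0) (hζ20 : ζ₂ 0 = 1/2)
    (hζ1 : ∀ i : ℕ, ζ₁ (i+1) = -2 * ζ₁ i + 2 * ζ₂ i + α i - 2 * γ i)
    (hζ2 : ∀ i : ℕ, ζ₂ (i+1) = 2 * ζ₁ i - 2 * ζ₂ i + α i - δ (i+1) / 2)
    (S : ℕ → ℚ)
    (hS : ∀ k : ℕ, S k = ∑ i ∈ Finset.range (k+2), β k i * (ζ₂ i - ζ₁ i)) :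
    ∀ k, 1 ≤ k → S (k+1) = -4 * S k := by
  have hα1 : α 1 = 1 := by rw [hα 1 le_rfl]; norm_num
  have hα2 : α 2 = -2 := by rw [hα 2 (by norm_num)]; norm_num
  have hα3 : α 3 = 6 := by
    rw [hα 3 (by norm_num)]
    norm_num [show (2*3-2 : ℕ) = 4 from rfl, show Nat.choose 4 2 = 6 from rfl]
  have hγ1 : γ 1 = 0 := by rw [hγ 1 le_rfl]; norm_num
  have hγ2 : γ 2 = 1 := by rw [hγ 2 (by norm_num)]; norm_num
  -- key identity: α (i+2) = -2 α (i+1) + 2 γ (i+1)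
  have hαkey : ∀ i : ℕ, α (i+2) = -2 * α (i+1) + 2 * γ (i+1) := by
    intro i
    rw [hα (i+2) (by omega), hα (i+1) (by omega), hγ (i+1) (by omega)]
    have e1 : 2*(i+2)-2 = 2*i+2 := by omega
    have e3 : 2*(i+1)-2 = 2*i := by omega
    have e2 : (i+2)-1 = i+1 := rfl
    have e4 : (i+1)-1 = i := rfl
    rw [e1, e3, e2, e4, choose_key i]
    push_cast
    ring
  -- U k := ∑ β k i * α (i+1) vanishes for k ≥ 1
  have hU : ∀ k, 1 ≤ k → ∑ i ∈ Finset.range (k+2), β k i * α (i+1) = 0 := by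
    intro k hk
    induction k, hk using Nat.le_induction with
    | base =>
      rw [Finset.sum_range_succ, Finset.sum_range_succ, Finset.sum_range_one]
      rw [hβ10, hβ11, hβ12, hα1, hα2, hα3]
      norm_num
    | succ n hn ih =>
      have : n + 1 + 2 = n + 3 := rfl
      rw [this, Finset.sum_range_succ']
      have hb : ∀ i ∈ Finset.range (n+2),
          β (n+1) (i+1) * α (i+1+1) = -4 * (β n i * α (i+1)) - β n i * δ (i+1) := by
        intro i hi
        simp only [Finset.mem_range] at hi
        rw [hβrec n hn (i+1) (by omega) (by omega)]
        simp only [Nat.add_sub_cancel]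
        rw [hαkey i, hδ (i+1) (by omega)]
        ring
      rw [Finset.sum_congr rfl hb, Finset.sum_sub_distrib, ← Finset.mul_sum,
        hβ0 n hn, hα1, mul_one, ih]
      ring
  -- T k := ∑ β k i * γ i vanishes for k ≥ 1
  have hT : ∀ k, 1 ≤ k → ∑ i ∈ Finset.range (k+2), β k i * γ i = 0 := by
    intro k hk
    induction k, hk using Nat.le_induction with
    | base =>
      rw [Finset.sum_range_succ, Finset.sum_range_succ, Finset.sum_range_one]
      rw [hβ10, hβ11, hβ12, hγ0, hγ1, hγ2]
      norm_num
    | succ n hn ih =>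
      have : n + 1 + 2 = n + 3 := rfl
      rw [this, Finset.sum_range_succ']
      have hb : ∀ i ∈ Finset.range (n+2),
          β (n+1) (i+1) * γ (i+1) = -(β n i * α (i+1)) - β n i * δ (i+1) / 2 := by
        intro i hi
        simp only [Finset.mem_range] at hi
        rw [hβrec n hn (i+1) (by omega) (by omega)]
        simp only [Nat.add_sub_cancel]
        rw [hδ (i+1) (by omega)]
        ring
      rw [Finset.sum_congr rfl hb, Finset.sum_sub_distrib, Finset.sum_neg_distrib,
        hU n hn, hβ0 n hn, hγ0]
      rw [← Finset.sum_div]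
      ring
  -- main argument
  intro k hk
  rw [hS (k+1), hS k]
  have : k + 1 + 2 = k + 3 := rfl
  rw [this, Finset.sum_range_succ']
  have hb : ∀ i ∈ Finset.range (k+2),
      β (k+1) (i+1) * (ζ₂ (i+1) - ζ₁ (i+1))
        = -4 * (β k i * (ζ₂ i - ζ₁ i)) + 2 * (β k i * γ i) - β k i * δ (i+1) / 2 := by
    intro i hi
    simp only [Finset.mem_range] at hi
    rw [hβrec k hk (i+1) (by omega) (by omega)]
    simp only [Nat.add_sub_cancel]
    rw [hζ1 i, hζ2 i]
    ring
  rw [Finset.sum_congr rfl hb, Finset.sum_sub_distrib, Finset.sum_add_distrib,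
    ← Finset.mul_sum, ← Finset.mul_sum, hT k hk, ← Finset.sum_div, hβ0 k hk,
    hζ10, hζ20]
  ring
end

section
/- For every integer k ≥ 1, Σ_{i=0}^{k+1} β_{k,i}·(ζ_{i,2} - ζ_{i,1}) = (-4)^k / 2, i.e. this sum equals (-1)^k · 2^(2k-1). -/
lemma binom_aux (j : ℕ) :
    Nat.choose (2*j+2) (j+1) = 2 * Nat.choose (2*j) j + 2 * Nat.choose (2*j) (j+1) := by
  have h1 : (2*j+1).choose j = (2*j+1).choose (j+1) := by
    rw [← Nat.choose_symm (show j+1 ≤ 2*j+1 by omega)]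
    congr 1; omega
  have h2 : (2*j+2).choose (j+1) = (2*j+1).choose j + (2*j+1).choose (j+1) :=
    Nat.choose_succ_succ _ _
  have h3 : (2*j+1).choose (j+1) = (2*j).choose j + (2*j).choose (j+1) :=
    Nat.choose_succ_succ _ _
  omega

/-- For every integer `k ≥ 1`,
`Σ_{i=0}^{k+1} β_{k,i} (ζ_{i,2} - ζ_{i,1}) = (-4)^k / 2`, i.e. this sum equals
`(-1)^k · 2^(2k-1)`.  Here `α_0 = 0`, `γ_0 = 1/2`,
`α_i = (-1)^(i-1) C(2i-2, i-1)`, `γ_i = (-1)^i C(2i-2, i)` for `i ≥ 1`,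
`δ_i = -2(α_i + γ_i)` for `i ≥ 1`; `β_{0,0} = 2`, `β_{0,1} = 1`, `β_{1,0} = -2`,
`β_{1,1} = 2`, `β_{1,2} = 1`, and for `k ≥ 1`: `β_{k+1,i} = β_{k,i-1}` for
`1 ≤ i ≤ k+2` and `β_{k+1,0} = Σ_{i=0}^{k+1} β_{k,i} δ_{i+1}`; and
`ζ_{0,1} = 0`, `ζ_{0,2} = 1/2`, `ζ_{i+1,1} = -2ζ_{i,1} + 2ζ_{i,2} + α_i - 2γ_i`,
`ζ_{i+1,2} = 2ζ_{i,1} - 2ζ_{i,2} + α_i - δ_{i+1}/2`. -/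
theorem stmt4 (α γ δ : ℕ → ℚ) (β : ℕ → ℕ → ℚ) (ζ₁ ζ₂ : ℕ → ℚ)
    (hα0 : α 0 = 0) (hγ0 : γ 0 = 1/2)
    (hα : ∀ i, 1 ≤ i → α i = (-1 : ℚ)^(i-1) * (Nat.choose (2*i-2) (i-1) : ℚ))
    (hγ : ∀ i, 1 ≤ i → γ i = (-1 : ℚ)^i * (Nat.choose (2*i-2) i : ℚ))
    (hδ : ∀ i, 1 ≤ i → δ i = -2 * (α i + γ i))
    (hβ00 : β 0 0 = 2) (hβ01 : β 0 1 = 1)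
    (hβ10 : β 1 0 = -2) (hβ11 : β 1 1 = 2) (hβ12 : β 1 2 = 1)
    (hβrec : ∀ k, 1 ≤ k → ∀ i, 1 ≤ i → i ≤ k + 2 → β (k+1) i = β k (i-1))
    (hβ0 : ∀ k, 1 ≤ k → β (k+1) 0 = ∑ i ∈ Finset.range (k+2), β k i * δ (i+1))
    (hζ10 : ζ₁ 0 = 0) (hζ20 : ζ₂ 0 = 1/2)
    (hζ1 : ∀ i : ℕ, ζ₁ (i+1) = -2 * ζ₁ i + 2 * ζ₂ i + α i - 2 * γ i)
    (hζ2 : ∀ i : ℕ, ζ₂ (i+1) = 2 * ζ₁ i - 2 * ζ₂ i + α i - δ (i+1) / 2)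
    :
    ∀ k, 1 ≤ k →
      (∑ i ∈ Finset.range (k+2), β k i * (ζ₂ i - ζ₁ i)) = (-4 : ℚ)^k / 2 ∧
      (∑ i ∈ Finset.range (k+2), β k i * (ζ₂ i - ζ₁ i)) = (-1 : ℚ)^k * 2^(2*k-1) := by
  -- shifted explicit formulas
  have hα' : ∀ j : ℕ, α (j+1) = (-1:ℚ)^j * (Nat.choose (2*j) j : ℚ) := by
    intro j
    rw [hα (j+1) (by omega)]
    congr 2 <;> omega
  have hγ' : ∀ j : ℕ, γ (j+1) = (-1:ℚ)^(j+1) * (Nat.choose (2*j) (j+1) : ℚ) := by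
    intro j
    rw [hγ (j+1) (by omega)]
    congr 2 <;> omega
  -- key pointwise identity
  have key : ∀ j : ℕ, δ (j+1) + α (j+2) = -4 * α (j+1) := by
    intro j
    have hb : ((2*j+2).choose (j+1) : ℚ)
        = 2 * ((2*j).choose j : ℚ) + 2 * ((2*j).choose (j+1) : ℚ) := by
      exact_mod_cast congrArg (Nat.cast : ℕ → ℚ) (binom_aux j)
    have h2 : α (j+2) = (-1:ℚ)^(j+1) * ((2*j+2).choose (j+1) : ℚ) := by
      have := hα' (j+1)
      rw [this]; congr 2 <;> omega
    rw [hδ (j+1) (by omega), hα' j, hγ' j, h2, hb, pow_succ]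
    ring
  -- values
  have hα1 : α 1 = 1 := by have h := hα' 0; norm_num at h; exact h
  have hα2 : α 2 = -2 := by have h := hα' 1; norm_num [Nat.choose] at h; exact h
  have hα3 : α 3 = 6 := by have h := hα' 2; norm_num [Nat.choose] at h; exact h
  have hγ1 : γ 1 = 0 := by have h := hγ' 0; norm_num [Nat.choose] at h; exact h
  have hγ2 : γ 2 = 1 := by have h := hγ' 1; norm_num [Nat.choose] at h; exact h
  have hδ1 : δ 1 = -2 := by rw [hδ 1 (by omega), hα1, hγ1]; norm_num
  have hδ2 : δ 2 = 2 := by rw [hδ 2 (by omega), hα2, hγ2]; norm_num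
  -- A_k = ∑ β k i * α (i+1) = 0 for all k
  have hA : ∀ k, (∑ i ∈ Finset.range (k+2), β k i * α (i+1)) = 0 := by
    have hA0 : (∑ i ∈ Finset.range 2, β 0 i * α (i+1)) = 0 := by
      norm_num [Finset.sum_range_succ, hβ00, hβ01, hα1, hα2]
    have hA1 : (∑ i ∈ Finset.range 3, β 1 i * α (i+1)) = 0 := by
      norm_num [Finset.sum_range_succ, hβ10, hβ11, hβ12, hα1, hα2, hα3]
    have step : ∀ k, 1 ≤ k →
        (∑ i ∈ Finset.range (k+2), β k i * α (i+1)) = 0 →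
        (∑ i ∈ Finset.range (k+3), β (k+1) i * α (i+1)) = 0 := by
      intro k hk ih
      rw [Finset.sum_range_succ' (fun i => β (k+1) i * α (i+1)) (k+2)]
      have e1 : ∀ i ∈ Finset.range (k+2), β (k+1) (i+1) * α (i+1+1)
          = β k i * α (i+2) := by
        intro i hi
        rw [hβrec k hk (i+1) (by omega) (by
          simp only [Finset.mem_range] at hi; omega)]
        simp
      rw [Finset.sum_congr rfl e1, hβ0 k hk, hα1, mul_one]
      rw [← Finset.sum_add_distrib]
      have e2 : ∀ i ∈ Finset.range (k+2),
          β k i * α (i+2) + β k i * δ (i+1) = -4 * (β k i * α (i+1)) := by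
        intro i _
        linear_combination β k i * key i
      rw [Finset.sum_congr rfl e2, ← Finset.mul_sum, ih, mul_zero]
    intro k
    match k with
    | 0 => exact hA0
    | (n+1) =>
      induction n with
      | zero => exact hA1
      | succ m ihm => exact step (m+1) (by omega) ihm
  -- T_k = ∑ β k i * γ i = 0 for k ≥ 1
  have hT : ∀ k, 1 ≤ k → (∑ i ∈ Finset.range (k+2), β k i * γ i) = 0 := by
    intro k hk
    match k, hk with
    | 1, _ =>
      norm_num [Finset.sum_range_succ, hβ10, hβ11, hβ12, hγ0, hγ1, hγ2]
    | (n+2), _ =>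
      have hn1 : 1 ≤ n+1 := by omega
      rw [Finset.sum_range_succ' (fun i => β (n+2) i * γ i) (n+3)]
      have e1 : ∀ i ∈ Finset.range (n+3), β (n+2) (i+1) * γ (i+1)
          = β (n+1) i * γ (i+1) := by
        intro i hi
        rw [show n+2 = n+1+1 from rfl,
          hβrec (n+1) hn1 (i+1) (by omega) (by
            simp only [Finset.mem_range] at hi; omega)]
        simp
      have hb : β (n+2) 0 = ∑ i ∈ Finset.range (n+3), β (n+1) i * δ (i+1) := by
        have := hβ0 (n+1) hn1
        simpa using this
      rw [Finset.sum_congr rfl e1, hb, hγ0]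
      have e2 : ∀ i ∈ Finset.range (n+3),
          β (n+1) i * γ (i+1) + β (n+1) i * δ (i+1) * (1/2)
          = -(β (n+1) i * α (i+1)) := by
        intro i _
        linear_combination (β (n+1) i / 2) * hδ (i+1) (by omega)
      calc (∑ i ∈ Finset.range (n+3), β (n+1) i * γ (i+1))
            + (∑ i ∈ Finset.range (n+3), β (n+1) i * δ (i+1)) * (1/2)
          = ∑ i ∈ Finset.range (n+3),
              (β (n+1) i * γ (i+1) + β (n+1) i * δ (i+1) * (1/2)) := by
            rw [Finset.sum_add_distrib, Finset.sum_mul]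
        _ = ∑ i ∈ Finset.range (n+3), -(β (n+1) i * α (i+1)) :=
            Finset.sum_congr rfl e2
        _ = -(∑ i ∈ Finset.range (n+3), β (n+1) i * α (i+1)) := by
            rw [Finset.sum_neg_distrib]
        _ = 0 := by
            have := hA (n+1)
            simp only [show n+1+2 = n+3 from rfl] at this
            rw [this, neg_zero]
  -- η recurrence
  set η : ℕ → ℚ := fun i => ζ₂ i - ζ₁ i with hη
  have hη0 : η 0 = 1/2 := by simp [hη, hζ10, hζ20]
  have hηrec : ∀ i, η (i+1) = -4 * η i + 2 * γ i - δ (i+1) / 2 := by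
    intro i
    simp only [hη, hζ1, hζ2]
    ring
  have hη1 : η 1 = 0 := by rw [hηrec 0, hη0, hγ0, hδ1]; ring
  have hη2 : η 2 = -1 := by rw [hηrec 1, hη1, hγ1, hδ2]; ring
  have hS1 : (∑ i ∈ Finset.range 3, β 1 i * η i) = -2 := by
    rw [Finset.sum_range_succ, Finset.sum_range_succ, Finset.sum_range_one,
      hβ10, hβ11, hβ12, hη0, hη1, hη2]
    ring
  -- S recurrence: S_{k+1} = -4 S_k for k ≥ 1
  have hSrec : ∀ k, 1 ≤ k →
      (∑ i ∈ Finset.range (k+3), β (k+1) i * η i)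
       = -4 * (∑ i ∈ Finset.range (k+2), β k i * η i) := by
    intro k hk
    rw [Finset.sum_range_succ' (fun i => β (k+1) i * η i) (k+2)]
    have e1 : ∀ i ∈ Finset.range (k+2), β (k+1) (i+1) * η (i+1)
        = -4 * (β k i * η i) + 2 * (β k i * γ i) - (β k i * δ (i+1)) * (1/2) := by
      intro i hi
      rw [hβrec k hk (i+1) (by omega) (by
        simp only [Finset.mem_range] at hi; omega), hηrec i]
      simp only [Nat.add_sub_cancel]
      ring
    rw [Finset.sum_congr rfl e1, hβ0 k hk, hη0]
    rw [Finset.sum_sub_distrib, Finset.sum_add_distrib, ← Finset.mul_sum,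
      ← Finset.mul_sum, ← Finset.sum_mul, hT k hk]
    ring
  -- main statement
  have main : ∀ k, 1 ≤ k →
      (∑ i ∈ Finset.range (k+2), β k i * η i) = (-4 : ℚ)^k / 2 := by
    intro k hk
    induction k with
    | zero => omega
    | succ n ih =>
      rcases Nat.lt_or_ge 1 (n+1) with h | h
      · have hn : 1 ≤ n := by omega
        rw [show n+1+2 = n+3 from rfl, hSrec n hn, ih hn, pow_succ]
        ring
      · obtain rfl : n = 0 := by omega
        show (∑ i ∈ Finset.range 3, β 1 i * η i) = (-4:ℚ)^1 / 2
        rw [hS1]; norm_num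
  intro k hk
  refine ⟨main k hk, ?_⟩
  rw [main k hk]
  obtain ⟨m, rfl⟩ : ∃ m, k = m + 1 := ⟨k - 1, by omega⟩
  have h1 : 2*(m+1)-1 = 2*m+1 := by omega
  rw [h1, show ((-4:ℚ)) = (-1) * 2^2 by norm_num, mul_pow, ← pow_mul]
  rw [show 2*(m+1) = (2*m+1)+1 from by ring, pow_succ]
  ring
end

section
/- For every integer k ≥ 1, Σ_{i=1}^{k+1} β_{k,i}·(α_{i-1} - γ_{i-1}) = 0. -/
/-- For every integer `k ≥ 1`, `Σ_{i=1}^{k+1} β_{k,i} (α_{i-1} - γ_{i-1}) = 0`.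
Here `α_0 = 0`, `γ_0 = 1/2`, `α_i = (-1)^(i-1) C(2i-2, i-1)`,
`γ_i = (-1)^i C(2i-2, i)` for `i ≥ 1`, `δ_i = -2(α_i + γ_i)` for `i ≥ 1`, and
`β_{0,0} = 2`, `β_{0,1} = 1`, `β_{1,0} = -2`, `β_{1,1} = 2`, `β_{1,2} = 1`,
with, for `k ≥ 1`: `β_{k+1,i} = β_{k,i-1}` for `1 ≤ i ≤ k+2` and
`β_{k+1,0} = Σ_{i=0}^{k+1} β_{k,i} δ_{i+1}`. -/
theorem stmt5 (α γ δ : ℕ → ℚ) (β : ℕ → ℕ → ℚ)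
    (hα0 : α 0 = 0) (hγ0 : γ 0 = 1/2)
    (hα : ∀ i, 1 ≤ i → α i = (-1 : ℚ)^(i-1) * (Nat.choose (2*i-2) (i-1) : ℚ))
    (hγ : ∀ i, 1 ≤ i → γ i = (-1 : ℚ)^i * (Nat.choose (2*i-2) i : ℚ))
    (hδ : ∀ i, 1 ≤ i → δ i = -2 * (α i + γ i))
    (hβ00 : β 0 0 = 2) (hβ01 : β 0 1 = 1)
    (hβ10 : β 1 0 = -2) (hβ11 : β 1 1 = 2) (hβ12 : β 1 2 = 1)
    (hβrec : ∀ k, 1 ≤ k → ∀ i, 1 ≤ i → i ≤ k + 2 → β (k+1) i = β k (i-1))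
    (hβ0 : ∀ k, 1 ≤ k → β (k+1) 0 = ∑ i ∈ Finset.range (k+2), β k i * δ (i+1)) :
    ∀ k, 1 ≤ k →
      (∑ i ∈ Finset.Icc 1 (k+1), β k i * (α (i-1) - γ (i-1))) = 0 := by
  -- Key identity: α (j+1) = -2 (α j - γ j).
  have key : ∀ j, α (j+1) = -2 * (α j - γ j) := by
    intro j
    cases j with
    | zero =>
      rw [hα 1 le_rfl, hα0, hγ0]
      norm_num
    | succ n =>
      rw [hα (n+2) (by omega), hα (n+1) (by omega), hγ (n+1) (by omega)]
      have h1 : 2*(n+2)-2 = 2*n+2 := by omega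
      have h2 : (n+2)-1 = n+1 := by omega
      have h3 : 2*(n+1)-2 = 2*n := by omega
      have h4 : (n+1)-1 = n := by omega
      rw [h1, h2, h3, h4]
      have e1 : (2*n+2).choose (n+1) = (2*n+1).choose n + (2*n+1).choose (n+1) := by
        rw [show 2*n+2 = (2*n+1)+1 from rfl]
        exact Nat.choose_succ_succ _ _
      have e2 : (2*n+1).choose (n+1) = (2*n).choose n + (2*n).choose (n+1) :=
        Nat.choose_succ_succ _ _
      have e3 : (2*n+1).choose n = (2*n+1).choose (n+1) := by
        have h := Nat.choose_symm (n := 2*n+1) (k := n+1) (by omega)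
        have : 2*n+1-(n+1) = n := by omega
        rw [this] at h
        exact h
      have hc : (2*n+2).choose (n+1) = 2 * ((2*n).choose n + (2*n).choose (n+1)) := by
        omega
      rw [hc]
      push_cast
      ring
  -- Invariant: T_k = ∑_{i=0}^{k+1} β_{k,i} (α_i - γ_i) = 0 for k ≥ 1.
  have hT : ∀ k, 1 ≤ k → ∑ i ∈ Finset.range (k+2), β k i * (α i - γ i) = 0 := by
    intro k hk
    induction k with
    | zero => omega
    | succ m ih =>
      by_cases hm : m = 0
      · subst hm
        rw [show (1:ℕ)+2 = 3 from rfl]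
        rw [Finset.sum_range_succ, Finset.sum_range_succ, Finset.sum_range_succ,
          Finset.sum_range_zero, hβ10, hβ11, hβ12, hα0, hγ0,
          hα 1 le_rfl, hγ 1 le_rfl, hα 2 (by omega), hγ 2 (by omega)]
        norm_num [Nat.choose]
      · have hm1 : 1 ≤ m := by omega
        have ihm := ih hm1
        rw [Finset.sum_range_succ']
        have e : (∑ i ∈ Finset.range (m+2), β (m+1) (i+1) * (α (i+1) - γ (i+1)))
            + β (m+1) 0 * (α 0 - γ 0)
            = (-4) * ∑ i ∈ Finset.range (m+2), β m i * (α i - γ i) := by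
          rw [hβ0 m hm1, hα0, hγ0, Finset.sum_mul, Finset.mul_sum,
            ← Finset.sum_add_distrib]
          apply Finset.sum_congr rfl
          intro i hi
          simp only [Finset.mem_range] at hi
          rw [hβrec m hm1 (i+1) (by omega) (by omega)]
          simp only [Nat.add_sub_cancel]
          rw [hδ (i+1) (by omega), key i]
          ring
        rw [e, ihm, mul_zero]
  intro k hk
  rcases k with _ | _ | m
  · omega
  · -- k = 1
    rw [show (1:ℕ)+1 = 2 from rfl]
    rw [show Finset.Icc 1 2 = {1, 2} from rfl]
    rw [Finset.sum_insert (by decide), Finset.sum_singleton, hβ11, hβ12,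
      hα0, hγ0, hα 1 le_rfl, hγ 1 le_rfl]
    norm_num [Nat.choose]
  · -- k = m + 2
    have hm1 : 1 ≤ m + 1 := by omega
    have e : ∑ i ∈ Finset.Icc 1 (m+2+1), β (m+2) i * (α (i-1) - γ (i-1))
        = ∑ j ∈ Finset.range (m+3), β (m+1) j * (α j - γ j) := by
      rw [show Finset.Icc 1 (m+2+1) = Finset.Ico 1 (m+4) by
        exact (Finset.Ico_add_one_right_eq_Icc (a := 1) (b := m+2+1)).symm]
      rw [Finset.sum_Ico_eq_sum_range]
      have hr : m+4-1 = m+3 := by omega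
      rw [hr]
      apply Finset.sum_congr rfl
      intro j hj
      simp only [Finset.mem_range] at hj
      rw [show 1 + j = j + 1 by ring, hβrec (m+1) hm1 (j+1) (by omega) (by omega)]
      simp only [Nat.add_sub_cancel]
    rw [e]
    exact hT (m+1) hm1
end

section
/- Let q : ℝ → ℝ be three times continuously differentiable and fix x ∈ ℝ. For h ∈ ℝ define w_h(y) = -2 + (1/2)q(y)h² + (1/8)q'(y)h³ - (1/32)q(y)²h⁴ and v_h(y) = 1 + (1/2)q(y)h² - (1/8)q'(y)h³ + (1/32)q(y)²h⁴. Then, as h → 0, -2 + 2·w_h(x) + w_h(x)² + v_h(x) + v_h(x+h) = (1/8)·(3·q(x)² + q''(x))·h⁴ + O(h⁵). -/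
open Asymptotics Filter Metric Set

private lemma seg_bound {g g' : ℝ → ℝ} {C r : ℝ} (hC : 0 ≤ C) {n : ℕ}
    (hd : ∀ t ∈ ball (0:ℝ) r, HasDerivAt g (g' t) t)
    (h0 : g 0 = 0)
    (hb : ∀ t ∈ ball (0:ℝ) r, |g' t| ≤ C * |t| ^ n)
    {h : ℝ} (hh : h ∈ ball (0:ℝ) r) : |g h| ≤ C * |h| ^ (n + 1) := by
  have hr : 0 < r := lt_of_le_of_lt dist_nonneg (mem_ball.mp hh)
  have h0r : (0:ℝ) ∈ ball (0:ℝ) r := mem_ball_self hr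
  have hsball : segment ℝ 0 h ⊆ ball (0:ℝ) r := (convex_ball _ _).segment_subset h0r hh
  have hsh : ∀ t ∈ segment ℝ 0 h, |t| ≤ |h| := by
    intro t ht
    have : t ∈ closedBall (0:ℝ) |h| :=
      (convex_closedBall (0:ℝ) |h|).segment_subset (mem_closedBall_self (abs_nonneg h))
        (by simp [mem_closedBall, Real.dist_eq]) ht
    simpa [mem_closedBall, Real.dist_eq] using this
  have key := (convex_segment (0:ℝ) h).norm_image_sub_le_of_norm_hasDerivWithin_le
    (f := g) (f' := g') (C := C * |h| ^ n)
    (fun t ht => (hd t (hsball ht)).hasDerivWithinAt)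
    (fun t ht => by
      calc ‖g' t‖ ≤ C * |t| ^ n := hb t (hsball ht)
        _ ≤ C * |h| ^ n :=
            mul_le_mul_of_nonneg_left (pow_le_pow_left₀ (abs_nonneg t) (hsh t ht) n) hC)
    (left_mem_segment ℝ 0 h) (right_mem_segment ℝ 0 h)
  calc |g h| = ‖g h - g 0‖ := by rw [h0]; simp [Real.norm_eq_abs]
    _ ≤ C * |h| ^ n * ‖h - 0‖ := key
    _ = C * |h| ^ (n + 1) := by rw [sub_zero, Real.norm_eq_abs, pow_succ, mul_assoc]

private lemma mem_shift {x r t : ℝ} (ht : t ∈ ball (0:ℝ) r) : x + t ∈ ball x r := by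
  simpa [Real.dist_eq, mem_ball] using mem_ball.mp ht

private lemma taylor1_pt {f : ℝ → ℝ} (hf : Differentiable ℝ f) {x K r : ℝ} (hK : 0 ≤ K)
    (hL : ∀ s ∈ ball x r, ∀ t ∈ ball x r, |deriv f s - deriv f t| ≤ K * |s - t|)
    {h : ℝ} (hh : h ∈ ball (0:ℝ) r) :
    |f (x + h) - f x - deriv f x * h| ≤ K * |h| ^ 2 := by
  have hr : 0 < r := lt_of_le_of_lt dist_nonneg (mem_ball.mp hh)
  have hx : x ∈ ball x r := mem_ball_self hr
  have := seg_bound (g := fun h => f (x + h) - f x - deriv f x * h)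
    (g' := fun t => deriv f (x + t) - deriv f x) (n := 1) hK
    (fun t ht => by
      have h1 : HasDerivAt (fun u : ℝ => f (x + u)) (deriv f (x + t)) t := by
        simpa [Function.comp_def] using (hf (x + t)).hasDerivAt.comp t ((hasDerivAt_id t).const_add x)
      have h2 : HasDerivAt (fun u : ℝ => deriv f x * u) (deriv f x) t := by
        simpa using (hasDerivAt_id t).const_mul (deriv f x)
      simpa [Pi.sub_def] using (h1.sub_const (f x)).sub h2)
    (by simp)
    (fun t ht => by
      have := hL (x + t) (mem_shift ht) x hx
      simpa using this)
    hh
  simpa using this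

private lemma taylor2_pt {f : ℝ → ℝ} (hf : Differentiable ℝ f)
    (hf' : Differentiable ℝ (deriv f)) {x K r : ℝ} (hK : 0 ≤ K)
    (hL : ∀ s ∈ ball x r, ∀ t ∈ ball x r,
      |deriv (deriv f) s - deriv (deriv f) t| ≤ K * |s - t|)
    {h : ℝ} (hh : h ∈ ball (0:ℝ) r) :
    |f (x + h) - f x - deriv f x * h - deriv (deriv f) x * h ^ 2 / 2| ≤ K * |h| ^ 3 := by
  have := seg_bound
    (g := fun h => f (x + h) - f x - deriv f x * h - deriv (deriv f) x * h ^ 2 / 2)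
    (g' := fun t => deriv f (x + t) - deriv f x - deriv (deriv f) x * t) (n := 2) hK
    (fun t ht => by
      have h1 : HasDerivAt (fun u : ℝ => f (x + u)) (deriv f (x + t)) t := by
        simpa [Function.comp_def] using (hf (x + t)).hasDerivAt.comp t ((hasDerivAt_id t).const_add x)
      have h2 : HasDerivAt (fun u : ℝ => deriv f x * u) (deriv f x) t := by
        simpa using (hasDerivAt_id t).const_mul (deriv f x)
      have h3 : HasDerivAt (fun u : ℝ => deriv (deriv f) x * u ^ 2 / 2)
          (deriv (deriv f) x * t) t := by
        have := ((hasDerivAt_pow 2 t).const_mul (deriv (deriv f) x)).div_const 2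
        simpa [mul_comm, mul_assoc, mul_div_assoc] using this
      simpa [Pi.sub_def] using (((h1.sub_const (f x)).sub h2).sub h3))
    (by simp)
    (fun t ht => taylor1_pt hf' hK hL ht)
    hh
  simpa using this

private lemma lip_ball {f : ℝ → ℝ} (hf : ContDiff ℝ 1 f) (x : ℝ) :
    ∃ K r : ℝ, 0 ≤ K ∧ 0 < r ∧
      ∀ s ∈ ball x r, ∀ t ∈ ball x r, |f s - f t| ≤ K * |s - t| := by
  obtain ⟨K, t, ht, hK⟩ := (hf.contDiffAt : ContDiffAt ℝ 1 f x).exists_lipschitzOnWith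
  obtain ⟨r, hr, hball⟩ := Metric.mem_nhds_iff.mp ht
  refine ⟨K, r, K.coe_nonneg, hr, fun s hs u hu => ?_⟩
  have := hK.dist_le_mul s (hball hs) u (hball hu)
  simpa [Real.dist_eq] using this

private lemma taylor0_O {f : ℝ → ℝ} (hf : ContDiff ℝ 1 f) (x : ℝ) :
    (fun h : ℝ => f (x + h) - f x) =O[nhds 0] fun h : ℝ => h := by
  obtain ⟨K, r, hK, hr, hL⟩ := lip_ball hf x
  rw [isBigO_iff]
  refine ⟨K, ?_⟩
  filter_upwards [Metric.ball_mem_nhds (0:ℝ) hr] with h hh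
  have := hL (x + h) (mem_shift hh) x (mem_ball_self hr)
  simpa [Real.norm_eq_abs] using this

private lemma taylor1_O {f : ℝ → ℝ} (hf : ContDiff ℝ 2 f) (x : ℝ) :
    (fun h : ℝ => f (x + h) - f x - deriv f x * h) =O[nhds 0] fun h : ℝ => h ^ 2 := by
  have hdiff : Differentiable ℝ f := hf.differentiable (by norm_num)
  have hf' : ContDiff ℝ 1 (deriv f) := by
    have h2 : ContDiff ℝ ((1 : WithTop ℕ∞) + 1) f := by norm_num; exact hf
    exact (contDiff_succ_iff_deriv.mp h2).2.2
  obtain ⟨K, r, hK, hr, hL⟩ := lip_ball hf' x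
  rw [isBigO_iff]
  refine ⟨K, ?_⟩
  filter_upwards [Metric.ball_mem_nhds (0:ℝ) hr] with h hh
  have := taylor1_pt hdiff hK hL hh
  simpa [Real.norm_eq_abs, abs_pow] using this

private lemma taylor2_O {f : ℝ → ℝ} (hf : ContDiff ℝ 3 f) (x : ℝ) :
    (fun h : ℝ => f (x + h) - f x - deriv f x * h - deriv (deriv f) x * h ^ 2 / 2)
      =O[nhds 0] fun h : ℝ => h ^ 3 := by
  have hdiff : Differentiable ℝ f := hf.differentiable (by norm_num)
  have hf' : ContDiff ℝ 2 (deriv f) := by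
    have h2 : ContDiff ℝ ((2 : WithTop ℕ∞) + 1) f := by norm_num; exact hf
    exact (contDiff_succ_iff_deriv.mp h2).2.2
  have hdiff' : Differentiable ℝ (deriv f) := hf'.differentiable (by norm_num)
  have hf'' : ContDiff ℝ 1 (deriv (deriv f)) := by
    have h2 : ContDiff ℝ ((1 : WithTop ℕ∞) + 1) (deriv f) := by norm_num; exact hf'
    exact (contDiff_succ_iff_deriv.mp h2).2.2
  obtain ⟨K, r, hK, hr, hL⟩ := lip_ball hf'' x
  rw [isBigO_iff]
  refine ⟨K, ?_⟩
  filter_upwards [Metric.ball_mem_nhds (0:ℝ) hr] with h hh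
  have := taylor2_pt hdiff hdiff' hK hL hh
  simpa [Real.norm_eq_abs, abs_pow] using this

/-- Let `q : ℝ → ℝ` be three times continuously differentiable and fix `x ∈ ℝ`.
For `h ∈ ℝ` define `w_h(y) = -2 + (1/2) q(y) h² + (1/8) q'(y) h³ - (1/32) q(y)² h⁴`
and `v_h(y) = 1 + (1/2) q(y) h² - (1/8) q'(y) h³ + (1/32) q(y)² h⁴`.
Then, as `h → 0`,
`-2 + 2 w_h(x) + w_h(x)² + v_h(x) + v_h(x+h) = (1/8)(3 q(x)² + q''(x)) h⁴ + O(h⁵)`. -/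
theorem stmt8 (q : ℝ → ℝ) (hq : ContDiff ℝ 3 q) (x : ℝ)
    (w v : ℝ → ℝ → ℝ)
    (hw : ∀ h y : ℝ, w h y = -2 + (1/2) * q y * h^2 + (1/8) * deriv q y * h^3 -
      (1/32) * (q y)^2 * h^4)
    (hv : ∀ h y : ℝ, v h y = 1 + (1/2) * q y * h^2 - (1/8) * deriv q y * h^3 +
      (1/32) * (q y)^2 * h^4) :
    (fun h : ℝ => -2 + 2 * w h x + (w h x)^2 + v h x + v h (x + h) -
        (1/8) * (3 * (q x)^2 + deriv (deriv q) x) * h^4)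
      =O[nhds 0] (fun h : ℝ => h^5) := by
  have hq' : ContDiff ℝ 2 (deriv q) := by
    have h2 : ContDiff ℝ ((2 : WithTop ℕ∞) + 1) q := by norm_num; exact hq
    exact (contDiff_succ_iff_deriv.mp h2).2.2
  have hE2 := taylor2_O hq x
  have hE1 := taylor1_O hq' x
  have hE0 := taylor0_O (f := fun y => (q y) ^ 2)
    ((hq.of_le (by norm_num)).pow 2) x
  set P := q x with hP
  set D := deriv q x with hD
  set S := deriv (deriv q) x with hS
  -- the higher-order exact polynomial remainder
  set G : ℝ → ℝ := fun h => P * D / 8 + (D ^ 2 / 64 - P ^ 3 / 32) * h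
      - P ^ 2 * D / 128 * h ^ 2 + P ^ 4 / 1024 * h ^ 3 with hGdef
  have hGO : (fun h : ℝ => h ^ 5 * G h) =O[nhds 0] fun h : ℝ => h ^ 5 := by
    have hcont : Filter.Tendsto G (nhds 0) (nhds (G 0)) := by
      apply Continuous.tendsto
      fun_prop
    have h1 : G =O[nhds (0:ℝ)] (fun _ => (1:ℝ)) := hcont.isBigO_one ℝ
    have := (isBigO_refl (fun h : ℝ => h ^ 5) (nhds 0)).mul h1
    simpa using this
  have hfun : (fun h : ℝ => -2 + 2 * w h x + (w h x)^2 + v h x + v h (x + h) -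
        (1/8) * (3 * (q x)^2 + deriv (deriv q) x) * h^4)
      = fun h : ℝ =>
        h ^ 2 / 2 * (q (x + h) - q x - deriv q x * h - deriv (deriv q) x * h ^ 2 / 2)
        - h ^ 3 / 8 * (deriv q (x + h) - deriv q x - deriv (deriv q) x * h)
        + h ^ 4 / 32 * ((fun y => (q y) ^ 2) (x + h) - (fun y => (q y) ^ 2) x)
        + h ^ 5 * G h := by
    funext h
    simp only [hw, hv, hGdef, ← hP, ← hD, ← hS]
    ring
  rw [hfun]
  have t2 : (fun h : ℝ => h ^ 2 / 2 *
      (q (x + h) - q x - deriv q x * h - deriv (deriv q) x * h ^ 2 / 2))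
      =O[nhds 0] fun h : ℝ => h ^ 5 := by
    have m := (isBigO_refl (fun h : ℝ => h ^ 2) (nhds 0)).mul hE2
    rw [show (fun h : ℝ => h ^ 2 * h ^ 3) = fun h : ℝ => h ^ 5 from
      funext fun h => by ring] at m
    exact (m.const_mul_left (1/2)).congr_left fun h => by ring
  have t1 : (fun h : ℝ => h ^ 3 / 8 *
      (deriv q (x + h) - deriv q x - deriv (deriv q) x * h))
      =O[nhds 0] fun h : ℝ => h ^ 5 := by
    have m := (isBigO_refl (fun h : ℝ => h ^ 3) (nhds 0)).mul hE1
    rw [show (fun h : ℝ => h ^ 3 * h ^ 2) = fun h : ℝ => h ^ 5 from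
      funext fun h => by ring] at m
    exact (m.const_mul_left (1/8)).congr_left fun h => by ring
  have t0 : (fun h : ℝ => h ^ 4 / 32 *
      ((fun y => (q y) ^ 2) (x + h) - (fun y => (q y) ^ 2) x))
      =O[nhds 0] fun h : ℝ => h ^ 5 := by
    have m := (isBigO_refl (fun h : ℝ => h ^ 4) (nhds 0)).mul hE0
    rw [show (fun h : ℝ => h ^ 4 * h) = fun h : ℝ => h ^ 5 from
      funext fun h => by ring] at m
    exact (m.const_mul_left (1/32)).congr_left fun h => by ring
  exact ((t2.sub t1).add t0).add hGO
end

section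
/- Let q : ℝ → ℝ be three times continuously differentiable and fix x ∈ ℝ. For h ∈ ℝ define w_h(y) = -2 + (1/2)q(y)h² + (1/8)q'(y)h³ - (1/32)q(y)²h⁴ and v_h(y) = 1 + (1/2)q(y)h² - (1/8)q'(y)h³ + (1/32)q(y)²h⁴. Then, as h → 0, 2/v_h(x) + 2 + w_h(x) + w_h(x-h) = (1/8)·(3·q(x)² + q''(x))·h⁴ + O(h⁵). -/
open Asymptotics Filter

/-- Mean value theorem step: if `f 0 = 0` and `deriv f = O(h^n)` near `0`,
then `f = O(h^(n+1))` near `0`. -/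
private lemma mvtO {f : ℝ → ℝ} (hf : Differentiable ℝ f) (h0 : f 0 = 0) {n : ℕ}
    (hd : (deriv f) =O[nhds 0] fun h : ℝ => h ^ n) :
    f =O[nhds 0] fun h : ℝ => h ^ (n + 1) := by
  rw [isBigO_iff] at hd ⊢
  obtain ⟨C, hC⟩ := hd
  rw [Metric.eventually_nhds_iff] at hC
  obtain ⟨ε, hε, hCb⟩ := hC
  refine ⟨max C 0, Metric.eventually_nhds_iff.2 ⟨ε, hε, ?_⟩⟩
  intro h hh
  rw [dist_zero_right, Real.norm_eq_abs] at hh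
  have key : ∀ t ∈ Set.uIcc (0:ℝ) h, ‖deriv f t‖ ≤ max C 0 * |h| ^ n := by
    intro t ht
    have h1 : |t| ≤ |h| := by
      rcases Set.mem_uIcc.mp ht with ⟨ha1, ha2⟩ | ⟨ha1, ha2⟩ <;> rw [abs_le] <;>
        constructor <;> nlinarith [le_abs_self h, neg_abs_le h]
    have h2 : dist t 0 < ε := by
      rw [dist_zero_right, Real.norm_eq_abs]
      exact lt_of_le_of_lt h1 hh
    calc ‖deriv f t‖ ≤ C * ‖t ^ n‖ := hCb h2
      _ ≤ max C 0 * ‖t ^ n‖ :=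
          mul_le_mul_of_nonneg_right (le_max_left _ _) (norm_nonneg _)
      _ ≤ max C 0 * |h| ^ n := by
          apply mul_le_mul_of_nonneg_left _ (le_max_right _ _)
          rw [norm_pow, Real.norm_eq_abs]
          exact pow_le_pow_left₀ (abs_nonneg _) h1 n
  have hmvt := (convex_uIcc (0:ℝ) h).norm_image_sub_le_of_norm_deriv_le
    (fun t _ => hf t) key Set.left_mem_uIcc Set.right_mem_uIcc
  rw [h0, sub_zero, sub_zero] at hmvt
  calc ‖f h‖ ≤ max C 0 * |h| ^ n * ‖h‖ := hmvt
    _ = max C 0 * ‖h ^ (n + 1)‖ := by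
        rw [norm_pow, Real.norm_eq_abs, pow_succ]; ring

/-- Assembling the three error terms. -/
private lemma assemble {r1 r2 A B C : ℝ → ℝ}
    (h1 : r1 =O[nhds 0] fun h : ℝ => h ^ 3)
    (h2 : r2 =O[nhds 0] fun h : ℝ => h ^ 2)
    (hA : A =O[nhds 0] fun _ : ℝ => (1:ℝ))
    (hB : B =O[nhds 0] fun _ : ℝ => (1:ℝ))
    (hC : C =O[nhds 0] fun _ : ℝ => (1:ℝ)) :
    (fun h : ℝ => h ^ 5 * A h + (r1 h * h ^ 2) * B h + (r2 h * h ^ 3) * C h)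
      =O[nhds 0] fun h : ℝ => h ^ 5 := by
  have t1 : (fun h : ℝ => h ^ 5 * A h) =O[nhds 0] fun h : ℝ => h ^ 5 :=
    ((isBigO_refl (fun h : ℝ => h ^ 5) (nhds 0)).mul hA).congr_right fun h => mul_one _
  have t2 : (fun h : ℝ => (r1 h * h ^ 2) * B h) =O[nhds 0] fun h : ℝ => h ^ 5 :=
    ((h1.mul (isBigO_refl (fun h : ℝ => h ^ 2) (nhds 0))).mul hB).congr_right
      fun h => by ring
  have t3 : (fun h : ℝ => (r2 h * h ^ 3) * C h) =O[nhds 0] fun h : ℝ => h ^ 5 :=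
    ((h2.mul (isBigO_refl (fun h : ℝ => h ^ 3) (nhds 0))).mul hC).congr_right
      fun h => by ring
  exact (t1.add t2).add t3

/-- Let `q : ℝ → ℝ` be three times continuously differentiable and fix `x ∈ ℝ`.
For `h ∈ ℝ` define `w_h(y) = -2 + (1/2) q(y) h² + (1/8) q'(y) h³ - (1/32) q(y)² h⁴`
and `v_h(y) = 1 + (1/2) q(y) h² - (1/8) q'(y) h³ + (1/32) q(y)² h⁴`.
Then, as `h → 0`,
`2/v_h(x) + 2 + w_h(x) + w_h(x-h) = (1/8)(3 q(x)² + q''(x)) h⁴ + O(h⁵)`. -/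
theorem stmt9 (q : ℝ → ℝ) (hq : ContDiff ℝ 3 q) (x : ℝ)
    (w v : ℝ → ℝ → ℝ)
    (hw : ∀ h y : ℝ, w h y = -2 + (1/2) * q y * h^2 + (1/8) * deriv q y * h^3 -
      (1/32) * (q y)^2 * h^4)
    (hv : ∀ h y : ℝ, v h y = 1 + (1/2) * q y * h^2 - (1/8) * deriv q y * h^3 +
      (1/32) * (q y)^2 * h^4) :
    (fun h : ℝ => 2 / v h x + 2 + w h x + w h (x - h) -
        (1/8) * (3 * (q x)^2 + deriv (deriv q) x) * h^4)
      =O[nhds 0] (fun h : ℝ => h^5) := by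
  -- regularity facts
  have hq3 : ContDiff ℝ ((3:ℕ) : WithTop ℕ∞) q := by exact_mod_cast hq
  have hdq : ContDiff ℝ ((2:ℕ) : WithTop ℕ∞) (deriv q) := by
    have := ContDiff.iterate_deriv' 2 1 (by exact_mod_cast hq3)
    simpa using this
  have hddq : ContDiff ℝ ((1:ℕ) : WithTop ℕ∞) (deriv (deriv q)) := by
    have := ContDiff.iterate_deriv' 1 1 (by exact_mod_cast hdq)
    simpa using this
  have Dq : Differentiable ℝ q := hq.differentiable (by norm_num)
  have Ddq : Differentiable ℝ (deriv q) := hdq.differentiable (by norm_num)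
  have Dddq : Differentiable ℝ (deriv (deriv q)) := hddq.differentiable (by norm_num)
  -- abbreviations
  obtain ⟨a, ha⟩ : ∃ a : ℝ, a = q x := ⟨_, rfl⟩
  obtain ⟨b, hb⟩ : ∃ b : ℝ, b = deriv q x := ⟨_, rfl⟩
  obtain ⟨c, hc⟩ : ∃ c : ℝ, c = deriv (deriv q) x := ⟨_, rfl⟩
  -- second derivative is Lipschitz-like at x
  have htend : Tendsto (fun h : ℝ => x - h) (nhds 0) (nhds x) := by
    have hcont : Continuous (fun h : ℝ => x - h) := continuous_const.sub continuous_id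
    simpa using hcont.tendsto 0
  have hg2 : (fun h : ℝ => deriv (deriv q) (x - h) - c) =O[nhds 0] fun h : ℝ => h := by
    have h1 : (fun y : ℝ => deriv (deriv q) y - deriv (deriv q) x) =O[nhds x]
        fun y : ℝ => y - x := (Dddq x).hasDerivAt.hasFDerivAt.isBigO_sub
    have h2 := h1.comp_tendsto htend
    simp only [Function.comp_def] at h2
    have h3 : (fun h : ℝ => x - h - x) =O[nhds 0] fun h : ℝ => h :=
      (isBigO_refl (fun h : ℝ => h) (nhds 0)).neg_left.congr_left fun h => by ring
    rw [hc]
    exact h2.trans h3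
  -- the second remainder r2
  have hr2d : ∀ h : ℝ, HasDerivAt (fun t : ℝ => deriv q (x - t) - (b - c * t))
      (deriv (deriv q) (x - h) * (-1) - (-(c * 1))) h := by
    intro h
    have h1 : HasDerivAt (fun t : ℝ => x - t) (-1) h := by
      simpa using (hasDerivAt_id h).const_sub x
    have h2 : HasDerivAt (deriv q) (deriv (deriv q) (x - h)) (x - h) :=
      (Ddq (x - h)).hasDerivAt
    have h3 : HasDerivAt (fun t : ℝ => deriv q (x - t))
        (deriv (deriv q) (x - h) * (-1)) h := h2.comp h h1
    have h4 : HasDerivAt (fun t : ℝ => b - c * t) (-(c * 1)) h :=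
      ((hasDerivAt_id h).const_mul c).const_sub b
    exact h3.sub h4
  have hr2diff : Differentiable ℝ (fun t : ℝ => deriv q (x - t) - (b - c * t)) :=
    fun h => (hr2d h).differentiableAt
  have hr2deriv : ∀ h : ℝ, deriv (fun t : ℝ => deriv q (x - t) - (b - c * t)) h
      = -(deriv (deriv q) (x - h) - c) := by
    intro h
    rw [(hr2d h).deriv]; ring
  have hO2 : (fun h : ℝ => deriv q (x - h) - (b - c * h)) =O[nhds 0]
      fun h : ℝ => h ^ 2 := by
    have hd : (deriv (fun t : ℝ => deriv q (x - t) - (b - c * t))) =O[nhds 0]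
        fun h : ℝ => h ^ 1 :=
      hg2.neg_left.congr' (Eventually.of_forall fun h => (hr2deriv h).symm)
        (Eventually.of_forall fun h => (pow_one h).symm)
    have h0 : (fun t : ℝ => deriv q (x - t) - (b - c * t)) 0 = 0 := by simp [hb]
    exact (mvtO hr2diff h0 hd).congr_right fun h => by norm_num
  -- the first remainder r1
  have hr1d : ∀ h : ℝ, HasDerivAt (fun t : ℝ => q (x - t) - (a - b * t + c / 2 * t ^ 2))
      (deriv q (x - h) * (-1) - (-(b * 1) + c / 2 * (2 * h ^ (2 - 1)))) h := by
    intro h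
    have h1 : HasDerivAt (fun t : ℝ => x - t) (-1) h := by
      simpa using (hasDerivAt_id h).const_sub x
    have h2 : HasDerivAt q (deriv q (x - h)) (x - h) := (Dq (x - h)).hasDerivAt
    have h3 : HasDerivAt (fun t : ℝ => q (x - t)) (deriv q (x - h) * (-1)) h :=
      h2.comp h h1
    have h4 : HasDerivAt (fun t : ℝ => a - b * t + c / 2 * t ^ 2)
        (-(b * 1) + c / 2 * (2 * h ^ (2 - 1))) h := by
      have hp : HasDerivAt (fun t : ℝ => t ^ 2) ((2 : ℕ) * h ^ (2 - 1)) h :=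
        hasDerivAt_pow 2 h
      exact (((hasDerivAt_id h).const_mul b).const_sub a).add
        (by simpa using hp.const_mul (c / 2))
    exact h3.sub h4
  have hr1diff : Differentiable ℝ (fun t : ℝ => q (x - t) - (a - b * t + c / 2 * t ^ 2)) :=
    fun h => (hr1d h).differentiableAt
  have hr1deriv : ∀ h : ℝ, deriv (fun t : ℝ => q (x - t) - (a - b * t + c / 2 * t ^ 2)) h
      = -(deriv q (x - h) - (b - c * h)) := by
    intro h
    rw [(hr1d h).deriv]; norm_num; ring
  have hO1 : (fun h : ℝ => q (x - h) - (a - b * h + c / 2 * h ^ 2)) =O[nhds 0]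
      fun h : ℝ => h ^ 3 := by
    have hd : (deriv (fun t : ℝ => q (x - t) - (a - b * t + c / 2 * t ^ 2))) =O[nhds 0]
        fun h : ℝ => h ^ 2 :=
      hO2.neg_left.congr' (Eventually.of_forall fun h => (hr1deriv h).symm)
        (Eventually.of_forall fun h => rfl)
    have h0 : (fun t : ℝ => q (x - t) - (a - b * t + c / 2 * t ^ 2)) 0 = 0 := by simp [ha]
    exact (mvtO hr1diff h0 hd).congr_right fun h => by norm_num
  -- continuity-based O(1) bounds
  have hu : Continuous (fun h : ℝ => q (x - h)) :=
    hq.continuous.comp (continuous_const.sub continuous_id)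
  have hAO : (fun h : ℝ => -(3/16) * a * b + (-(3/16) * a^3 - 1/32 * a * c) * h
      + (5/64 * a^2 * b + 1/32 * b * c) * h^2
      + (-(7/512) * a^4 - 1/64 * a^2 * c - 3/128 * a * b^2 - 1/128 * c^2) * h^3
      + (1/512 * a^3 * b + 5/256 * a * b * c + 1/256 * b^3) * h^4
      + (-(1/1024) * a^3 * c - 1/1024 * a^2 * b^2 - 1/256 * b^2 * c - 1/256 * a * c^2) * h^5
      + (1/1024 * a^2 * b * c + 1/1024 * b * c^2) * h^6
      - 1/4096 * a^2 * c^2 * h^7) =O[nhds 0] fun _ : ℝ => (1:ℝ) := by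
    have hcont : Continuous (fun h : ℝ => -(3/16) * a * b + (-(3/16) * a^3 - 1/32 * a * c) * h
      + (5/64 * a^2 * b + 1/32 * b * c) * h^2
      + (-(7/512) * a^4 - 1/64 * a^2 * c - 3/128 * a * b^2 - 1/128 * c^2) * h^3
      + (1/512 * a^3 * b + 5/256 * a * b * c + 1/256 * b^3) * h^4
      + (-(1/1024) * a^3 * c - 1/1024 * a^2 * b^2 - 1/256 * b^2 * c - 1/256 * a * c^2) * h^5
      + (1/1024 * a^2 * b * c + 1/1024 * b * c^2) * h^6
      - 1/4096 * a^2 * c^2 * h^7) := by fun_prop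
    exact (hcont.tendsto 0).isBigO_one ℝ
  have hBO : (fun h : ℝ => (1/2 - 1/32 * (a - b * h + c / 2 * h ^ 2 + q (x - h)) * h ^ 2)
      * (1 + 1/2 * a * h^2 - 1/8 * b * h^3 + 1/32 * a^2 * h^4))
      =O[nhds 0] fun _ : ℝ => (1:ℝ) := by
    have hcont : Continuous (fun h : ℝ =>
        (1/2 - 1/32 * (a - b * h + c / 2 * h ^ 2 + q (x - h)) * h ^ 2)
        * (1 + 1/2 * a * h^2 - 1/8 * b * h^3 + 1/32 * a^2 * h^4)) := by fun_prop
    exact (hcont.tendsto 0).isBigO_one ℝ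
  have hCO : (fun h : ℝ => (1 + 1/2 * a * h^2 - 1/8 * b * h^3 + 1/32 * a^2 * h^4) / 8)
      =O[nhds 0] fun _ : ℝ => (1:ℝ) := by
    have hcont : Continuous (fun h : ℝ =>
        (1 + 1/2 * a * h^2 - 1/8 * b * h^3 + 1/32 * a^2 * h^4) / 8) := by fun_prop
    exact (hcont.tendsto 0).isBigO_one ℝ
  -- the product with v is O(h^5)
  have hG : (fun h : ℝ => 2 + (2 + (-2 + (1/2) * a * h^2 + (1/8) * b * h^3 - (1/32) * a^2 * h^4)
      + (-2 + (1/2) * q (x - h) * h^2 + (1/8) * deriv q (x - h) * h^3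
        - (1/32) * (q (x - h))^2 * h^4)
      - (1/8) * (3 * a^2 + c) * h^4)
      * (1 + (1/2) * a * h^2 - (1/8) * b * h^3 + (1/32) * a^2 * h^4))
      =O[nhds 0] fun h : ℝ => h ^ 5 :=
    (assemble hO1 hO2 hAO hBO hCO).congr_left fun h => by ring
  -- behavior of v near 0
  have hVt : Tendsto (fun h : ℝ => 1 + (1/2) * a * h^2 - (1/8) * b * h^3
      + (1/32) * a^2 * h^4) (nhds 0) (nhds 1) := by
    have hcont : Continuous (fun h : ℝ => 1 + (1/2) * a * h^2 - (1/8) * b * h^3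
        + (1/32) * a^2 * h^4) := by fun_prop
    have := hcont.tendsto 0
    norm_num at this
    exact this
  have hVne : ∀ᶠ h in nhds (0:ℝ), (1 + (1/2) * a * h^2 - (1/8) * b * h^3
      + (1/32) * a^2 * h^4) ≠ 0 := hVt.eventually_ne one_ne_zero
  have hVinv : Tendsto (fun h : ℝ => (1 + (1/2) * a * h^2 - (1/8) * b * h^3
      + (1/32) * a^2 * h^4)⁻¹) (nhds 0) (nhds 1) := by
    simpa using hVt.inv₀ one_ne_zero
  -- put everything together
  simp only [hw, hv, ← ha, ← hb, ← hc]
  have hmul := hG.mul (hVinv.isBigO_one ℝ)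
  refine hmul.congr' ?_ (Eventually.of_forall fun h => mul_one _)
  filter_upwards [hVne] with h hne
  have hVV : (1 + (1/2) * a * h^2 - (1/8) * b * h^3 + (1/32) * a^2 * h^4)
      * (1 + (1/2) * a * h^2 - (1/8) * b * h^3 + (1/32) * a^2 * h^4)⁻¹ = 1 :=
    mul_inv_cancel₀ hne
  linear_combination (2 + (-2 + (1/2) * a * h^2 + (1/8) * b * h^3 - (1/32) * a^2 * h^4)
    + (-2 + (1/2) * q (x - h) * h^2 + (1/8) * deriv q (x - h) * h^3
      - (1/32) * (q (x - h))^2 * h^4)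
    - (1/8) * (3 * a^2 + c) * h^4) * hVV
end

section
/- Let (a_i)_{i≥0} and (b_i)_{i≥0} be sequences of rational numbers satisfying a_0 = 1/2, b_0 = 0, b_{i+1} = -2(a_i + b_i) for all i ≥ 0, and Σ_{i=0}^{k} (a_i·a_{k-i} - b_i·b_{k-i}) = 0 for all k ≥ 1. Then for every i ≥ 1, b_i = (-1)^i·C(2i-2, i-1) and a_i = (-1)^i·C(2i-2, i) (in particular a_1 = 0, b_1 = -1). -/
open Finset Nat

/- catalan convolution as a range sum -/
lemma cat_conv (n : ℕ) :
    catalan (n + 1) = ∑ i ∈ range (n + 1), catalan i * catalan (n - i) := by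
  rw [catalan_succ]
  exact Fin.sum_univ_eq_sum_range (fun i => catalan i * catalan (n - i)) (n + 1)

/- 2 ∑ c_m Cat_{n-m} = c_{n+1} -/
lemma two_mul_conv (n : ℕ) :
    2 * ∑ m ∈ range (n + 1), Nat.centralBinom m * catalan (n - m)
      = Nat.centralBinom (n + 1) := by
  have hrefl : ∑ m ∈ range (n + 1), Nat.centralBinom m * catalan (n - m)
      = ∑ m ∈ range (n + 1), Nat.centralBinom (n - m) * catalan m := by
    rw [← Finset.sum_range_reflect]
    apply Finset.sum_congr rfl
    intro i hi
    rw [Finset.mem_range] at hi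
    have e1 : n + 1 - 1 - i = n - i := by omega
    have e2 : n - (n - i) = i := by omega
    rw [e1, e2]
  have key : ∑ m ∈ range (n + 1),
      (Nat.centralBinom m * catalan (n - m) + Nat.centralBinom (n - m) * catalan m)
      = (n + 2) * catalan (n + 1) := by
    rw [cat_conv]
    rw [Finset.mul_sum]
    apply Finset.sum_congr rfl
    intro m hm
    rw [Finset.mem_range] at hm
    rw [← succ_mul_catalan_eq_centralBinom m, ← succ_mul_catalan_eq_centralBinom (n - m)]
    have h1 : (m + 1) + ((n - m) + 1) = n + 2 := by omega
    calc (m + 1) * catalan m * catalan (n - m) + (n - m + 1) * catalan (n - m) * catalan m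
        = ((m + 1) + ((n - m) + 1)) * (catalan m * catalan (n - m)) := by ring
      _ = (n + 2) * (catalan m * catalan (n - m)) := by rw [h1]
  calc 2 * ∑ m ∈ range (n + 1), Nat.centralBinom m * catalan (n - m)
      = ∑ m ∈ range (n + 1), Nat.centralBinom m * catalan (n - m)
        + ∑ m ∈ range (n + 1), Nat.centralBinom (n - m) * catalan m := by
        rw [← hrefl]; ring
    _ = ∑ m ∈ range (n + 1),
        (Nat.centralBinom m * catalan (n - m) + Nat.centralBinom (n - m) * catalan m) := by
        rw [Finset.sum_add_distrib]
    _ = (n + 2) * catalan (n + 1) := key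
    _ = Nat.centralBinom (n + 1) := succ_mul_catalan_eq_centralBinom (n + 1)

/- C(2m, m+1) + catalan m = C(2m, m) -/
lemma choose_succ_add_catalan (m : ℕ) :
    Nat.choose (2 * m) (m + 1) + catalan m = Nat.centralBinom m := by
  have h1 : Nat.choose (2 * m) (m + 1) * (m + 1) = Nat.choose (2 * m) m * m := by
    have := Nat.choose_succ_right_eq (2 * m) m
    simpa [show 2 * m - m = m by omega] using this
  have h2 : (m + 1) * catalan m = Nat.centralBinom m :=
    succ_mul_catalan_eq_centralBinom m
  have h3 : Nat.centralBinom m = Nat.choose (2 * m) m := rfl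
  have : (Nat.choose (2 * m) (m + 1) + catalan m) * (m + 1)
      = Nat.centralBinom m * (m + 1) := by
    rw [Nat.add_mul, h1, mul_comm (catalan m) (m + 1), h2, h3]; ring
  exact Nat.eq_of_mul_eq_mul_right (Nat.succ_pos m) this

/- key rational identity -/
lemma key_main (n : ℕ) :
    ∑ m ∈ range (n + 1),
        (((Nat.choose (2 * m) (m + 1) : ℚ)) * (Nat.choose (2 * (n - m)) ((n - m) + 1) : ℚ)
          - (Nat.centralBinom m : ℚ) * (Nat.centralBinom (n - m) : ℚ))
      = -((Nat.choose (2 * (n + 1)) (n + 2) : ℚ)) := by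
  have hA : ∀ m : ℕ, (Nat.choose (2 * m) (m + 1) : ℚ)
      = (Nat.centralBinom m : ℚ) - (catalan m : ℚ) := by
    intro m
    have := choose_succ_add_catalan m
    have : ((Nat.choose (2 * m) (m + 1) + catalan m : ℕ) : ℚ) = (Nat.centralBinom m : ℚ) := by
      rw [this]
    push_cast at this
    linarith
  have expand : ∀ m ∈ range (n + 1),
      (((Nat.choose (2 * m) (m + 1) : ℚ)) * (Nat.choose (2 * (n - m)) ((n - m) + 1) : ℚ)
          - (Nat.centralBinom m : ℚ) * (Nat.centralBinom (n - m) : ℚ))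
      = (catalan m : ℚ) * (catalan (n - m) : ℚ)
        - (Nat.centralBinom m : ℚ) * (catalan (n - m) : ℚ)
        - (catalan m : ℚ) * (Nat.centralBinom (n - m) : ℚ) := by
    intro m _
    rw [hA m, hA (n - m)]; ring
  rw [Finset.sum_congr rfl expand]
  have hcat : ∑ m ∈ range (n + 1), (catalan m : ℚ) * (catalan (n - m) : ℚ)
      = (catalan (n + 1) : ℚ) := by
    rw [cat_conv n]; push_cast; ring
  have hF : ∑ m ∈ range (n + 1), (Nat.centralBinom m : ℚ) * (catalan (n - m) : ℚ)
      = (Nat.centralBinom (n + 1) : ℚ) / 2 := by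
    have := two_mul_conv n
    have h2 : ((2 * ∑ m ∈ range (n + 1), Nat.centralBinom m * catalan (n - m) : ℕ) : ℚ)
        = (Nat.centralBinom (n + 1) : ℚ) := by rw [this]
    push_cast at h2
    linarith
  have hF' : ∑ m ∈ range (n + 1), (catalan m : ℚ) * (Nat.centralBinom (n - m) : ℚ)
      = (Nat.centralBinom (n + 1) : ℚ) / 2 := by
    rw [← Finset.sum_range_reflect]
    rw [← hF]
    apply Finset.sum_congr rfl
    intro i hi
    rw [Finset.mem_range] at hi
    have e1 : n + 1 - 1 - i = n - i := by omega
    have e2 : n - (n - i) = i := by omega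
    rw [e1, e2]; ring
  have hend : (Nat.choose (2 * (n + 1)) (n + 2) : ℚ)
      = (Nat.centralBinom (n + 1) : ℚ) - (catalan (n + 1) : ℚ) := by
    have := hA (n + 1)
    simpa using this
  rw [Finset.sum_sub_distrib, Finset.sum_sub_distrib, hcat, hF, hF', hend]
  ring

/- Pascal-type identity for the b recursion -/
lemma b_pascal (k : ℕ) :
    Nat.choose (2 * k + 2) (k + 1)
      = 2 * (Nat.choose (2 * k) (k + 1) + Nat.choose (2 * k) k) := by
  have h1 : Nat.choose (2 * k + 2) (k + 1)
      = Nat.choose (2 * k + 1) k + Nat.choose (2 * k + 1) (k + 1) :=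
    Nat.choose_succ_succ' (2 * k + 1) k
  have h2 : Nat.choose (2 * k + 1) (k + 1)
      = Nat.choose (2 * k) k + Nat.choose (2 * k) (k + 1) :=
    Nat.choose_succ_succ' (2 * k) k
  have h3 : Nat.choose (2 * k + 1) k = Nat.choose (2 * k + 1) (k + 1) := by
    rw [← Nat.choose_symm (by omega : k + 1 ≤ 2 * k + 1)]
    congr 1
    omega
  omega

/-- Let `(a_i)` and `(b_i)` be rational sequences with `a_0 = 1/2`, `b_0 = 0`,
`b_{i+1} = -2(a_i + b_i)` for all `i ≥ 0`, and
`Σ_{i=0}^{k} (a_i a_{k-i} - b_i b_{k-i}) = 0` for all `k ≥ 1`.  Then for every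
`i ≥ 1`, `b_i = (-1)^i C(2i-2, i-1)` and `a_i = (-1)^i C(2i-2, i)`
(in particular `a_1 = 0`, `b_1 = -1`). -/
theorem stmt10 (a b : ℕ → ℚ)
    (ha0 : a 0 = 1/2) (hb0 : b 0 = 0)
    (hb : ∀ i : ℕ, b (i+1) = -2 * (a i + b i))
    (hTu : ∀ k, 1 ≤ k →
      (∑ i ∈ Finset.range (k+1), (a i * a (k-i) - b i * b (k-i))) = 0) :
    ∀ i, 1 ≤ i →
      b i = (-1 : ℚ)^i * (Nat.choose (2*i-2) (i-1) : ℚ) ∧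
      a i = (-1 : ℚ)^i * (Nat.choose (2*i-2) i : ℚ) := by
  -- the closed forms, with shifted index to avoid ℕ subtraction
  have main : ∀ k : ℕ,
      b (k + 1) = (-1 : ℚ)^(k+1) * (Nat.choose (2*k) k : ℚ) ∧
      a (k + 1) = (-1 : ℚ)^(k+1) * (Nat.choose (2*k) (k+1) : ℚ) := by
    intro k
    induction k using Nat.strong_induction_on with
    | _ k ih =>
      match k with
      | 0 =>
        constructor
        · rw [hb 0, ha0, hb0]; norm_num
        · have h := hTu 1 le_rfl
          rw [Finset.sum_range_succ, Finset.sum_range_one] at h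
          simp only [Nat.sub_self, Nat.sub_zero] at h
          rw [ha0, hb0] at h
          have ha1 : a 1 = 0 := by linarith [h]
          rw [ha1]; norm_num
      | k + 1 =>
        -- k+2 case (index k+1 in ih-shifted terms); here goal is about a/b (k+2)
        have iha : ∀ j : ℕ, j < k + 1 →
            a (j + 1) = (-1 : ℚ)^(j+1) * (Nat.choose (2*j) (j+1) : ℚ) :=
          fun j hj => (ih j hj).2
        have ihb : ∀ j : ℕ, j < k + 1 →
            b (j + 1) = (-1 : ℚ)^(j+1) * (Nat.choose (2*j) j : ℚ) :=
          fun j hj => (ih j hj).1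
        have hak1 : a (k + 1) = (-1 : ℚ)^(k+1) * (Nat.choose (2*k) (k+1) : ℚ) :=
          (ih k (lt_add_one k)).2
        have hbk1 : b (k + 1) = (-1 : ℚ)^(k+1) * (Nat.choose (2*k) k : ℚ) :=
          (ih k (lt_add_one k)).1
        constructor
        · -- b (k+2)
          rw [hb (k + 1), hak1, hbk1]
          have : Nat.choose (2 * (k+1)) (k+1)
              = 2 * (Nat.choose (2*k) (k+1) + Nat.choose (2*k) k) := by
            have := b_pascal k
            rw [show 2 * (k+1) = 2*k + 2 by ring] at *
            exact this
          rw [this]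
          push_cast
          simp only [pow_succ]
          ring
        · -- a (k+2) from hTu (k+2)
          have h := hTu (k + 2) (by omega)
          rw [Finset.sum_range_succ, Finset.sum_range_succ'] at h
          -- h : (∑ i in range (k+1), f (i+1)) + f 0 + f (k+2) = 0
          have hmid : ∑ i ∈ range (k + 1),
              (a (i+1) * a (k + 2 - (i+1)) - b (i+1) * b (k + 2 - (i+1)))
              = (-1 : ℚ)^k * ∑ m ∈ range (k + 1),
                  (((Nat.choose (2 * m) (m + 1) : ℚ))
                      * (Nat.choose (2 * (k - m)) ((k - m) + 1) : ℚ)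
                    - (Nat.centralBinom m : ℚ) * (Nat.centralBinom (k - m) : ℚ)) := by
            rw [Finset.mul_sum]
            apply Finset.sum_congr rfl
            intro i hi
            rw [Finset.mem_range] at hi
            have hi2 : k + 2 - (i + 1) = (k - i) + 1 := by omega
            rw [hi2]
            rw [iha i (by omega), iha (k - i) (by omega),
                ihb i (by omega), ihb (k - i) (by omega)]
            have hsign : (-1 : ℚ)^(i+1) * (-1 : ℚ)^((k-i)+1) = (-1 : ℚ)^k := by
              rw [← pow_add]
              have : i + 1 + (k - i + 1) = k + 2 := by omega
              rw [this, pow_add]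
              norm_num
            have hcb1 : (Nat.centralBinom i : ℚ) = (Nat.choose (2*i) i : ℚ) := rfl
            have hcb2 : (Nat.centralBinom (k - i) : ℚ)
                = (Nat.choose (2*(k-i)) (k-i) : ℚ) := rfl
            rw [hcb1, hcb2]
            calc (-1 : ℚ)^(i+1) * (Nat.choose (2*i) (i+1) : ℚ)
                  * ((-1 : ℚ)^((k-i)+1) * (Nat.choose (2*(k-i)) ((k-i)+1) : ℚ))
                - (-1 : ℚ)^(i+1) * (Nat.choose (2*i) i : ℚ)
                  * ((-1 : ℚ)^((k-i)+1) * (Nat.choose (2*(k-i)) (k-i) : ℚ))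
                = ((-1 : ℚ)^(i+1) * (-1 : ℚ)^((k-i)+1))
                  * ((Nat.choose (2*i) (i+1) : ℚ) * (Nat.choose (2*(k-i)) ((k-i)+1) : ℚ)
                    - (Nat.choose (2*i) i : ℚ) * (Nat.choose (2*(k-i)) (k-i) : ℚ)) := by ring
              _ = _ := by rw [hsign]
          rw [hmid, key_main k] at h
          have h0 : a 0 * a (k + 2 - 0) - b 0 * b (k + 2 - 0) = a (k+2) / 2 := by
            rw [ha0, hb0]; simp; ring
          have hlast : a (k+2) * a (k + 2 - (k+2)) - b (k+2) * b (k + 2 - (k+2))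
              = a (k+2) / 2 := by
            simp only [Nat.sub_self]
            rw [ha0, hb0]; ring
          rw [h0, hlast] at h
          have := h
          have hck : (Nat.choose (2 * (k + 1)) (k + 2) : ℚ)
              = (Nat.choose (2 * (k+1)) ((k+1)+1) : ℚ) := by norm_num
          have : a (k + 2) = (-1 : ℚ)^k * (Nat.choose (2 * (k+1)) (k + 2) : ℚ) := by
            linarith [h]
          rw [this]
          have hs : (-1 : ℚ)^(k+2) = (-1 : ℚ)^k := by
            rw [pow_add]; norm_num
          rw [hs]
  intro i hi
  obtain ⟨j, rfl⟩ : ∃ j, i = j + 1 := ⟨i - 1, by omega⟩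
  have := main j
  have h1 : 2 * (j + 1) - 2 = 2 * j := by omega
  have h2 : j + 1 - 1 = j := by omega
  rw [h1, h2]
  exact ⟨this.1, this.2⟩
end
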